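/- For every y_c ∈ (-1,1), the region-based first-order Sobol' index of input X2 for the region C(y_c) equals SI_2^{C(y_c)} = |y_c|/(1 + |y_c|). -/

import Mathlib

open MeasureTheory ProbabilityTheory Set

/-- The uniform probability measure on the square [-1,1] × [-1,1]. -/
noncomputable def unifSq : Measure (ℝ × ℝ) :=
  (4 : ENNReal)⁻¹ •
    ((volume.restrict (Icc (-1 : ℝ) 1)).prod (volume.restrict (Icc (-1 : ℝ) 1)))

/-- sign(x) = 1 if x ≥ 0 and -1 if x < 0. -/
noncomputable def sgn (x : ℝ) : ℝ := if 0 ≤ x then 1 else -1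

/-- The model output Y = sign(X1)·|X2|. -/
noncomputable def Ymod (ω : ℝ × ℝ) : ℝ := sgn ω.1 * |ω.2|

/-- The membership indicator 1_C(Y). -/
noncomputable def indC (C : Set ℝ) (ω : ℝ × ℝ) : ℝ := C.indicator 1 (Ymod ω)

/-- Region-based first-order Sobol' index of input X (given as a coordinate map)
for the region C : Var(E[1_C(Y) | X]) / Var(1_C(Y)). -/
noncomputable def SIdx (X : ℝ × ℝ → ℝ) (C : Set ℝ) : ℝ :=
  variance (unifSq[indC C | MeasurableSpace.comap X inferInstance]) unifSq /
    variance (indC C) unifSq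

-- basic measurability
lemma sgn_meas : Measurable sgn :=
  Measurable.ite (measurableSet_le measurable_const measurable_id) measurable_const
    measurable_const

lemma Ymod_meas : Measurable Ymod :=
  (sgn_meas.comp measurable_fst).mul measurable_snd.abs

-- variance congruence
lemma variance_congr {Ω : Type*} {m : MeasurableSpace Ω} {X Y : Ω → ℝ} {μ : Measure Ω}
    (h : X =ᵐ[μ] Y) : variance X μ = variance Y μ := by
  unfold ProbabilityTheory.variance ProbabilityTheory.evariance
  rw [integral_congr_ae h]
  congr 1
  refine lintegral_congr_ae (h.mono fun ω hω => by simp only [hω])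

lemma unifSq_apply {S : Set (ℝ × ℝ)} (hS : MeasurableSet S) :
    unifSq S = 4⁻¹ * (volume.prod volume) (S ∩ (Icc (-1:ℝ) 1 ×ˢ Icc (-1:ℝ) 1)) := by
  rw [unifSq, Measure.smul_apply, Measure.prod_restrict, Measure.restrict_apply hS,
    smul_eq_mul]

instance : IsProbabilityMeasure unifSq := by
  constructor
  rw [unifSq_apply MeasurableSet.univ, Set.univ_inter, Measure.prod_prod, Real.volume_Icc]
  norm_num
  exact ENNReal.inv_mul_cancel (by norm_num) (by norm_num)

lemma ennfact : (4:ENNReal)⁻¹ * 2 = 2⁻¹ := by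
  have h4 : (4:ENNReal) = 2*2 := by norm_num
  rw [h4, ENNReal.mul_inv (by norm_num) (by norm_num), mul_assoc,
    ENNReal.inv_mul_cancel (by norm_num) (by norm_num), mul_one]

lemma snd_inter_sq (u : Set ℝ) :
    Prod.snd ⁻¹' u ∩ (Icc (-1:ℝ) 1 ×ˢ Icc (-1:ℝ) 1) = Icc (-1:ℝ) 1 ×ˢ (Icc (-1:ℝ) 1 ∩ u) := by
  ext ⟨x,t⟩
  simp only [Set.mem_inter_iff, Set.mem_preimage, Set.mem_prod, Set.mem_inter_iff]
  tauto

lemma unifSq_snd {u : Set ℝ} (hu : MeasurableSet u) :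
    unifSq (Prod.snd ⁻¹' u) = 2⁻¹ * volume (Icc (-1:ℝ) 1 ∩ u) := by
  rw [unifSq_apply (measurable_snd hu), snd_inter_sq, Measure.prod_prod, Real.volume_Icc]
  norm_num
  rw [← mul_assoc, ennfact]

lemma decompA {yc : ℝ} :
    Ymod ⁻¹' (Icc (-1) yc) ∩ (Icc (-1:ℝ) 1 ×ˢ Icc (-1:ℝ) 1)
    = (Ico (-1:ℝ) 0 ×ˢ (Icc (-1:ℝ) 1 ∩ (Ioo yc (-yc))ᶜ))
      ∪ (Icc (0:ℝ) 1 ×ˢ (Icc (-1:ℝ) 1 ∩ Icc (-yc) yc)) := by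
  ext ⟨x,t⟩
  simp only [Set.mem_inter_iff, Set.mem_preimage, Set.mem_Icc, Set.mem_prod, Set.mem_union,
    Set.mem_Ico, Set.mem_compl_iff, Set.mem_Ioo, Ymod, sgn, not_and, not_lt]
  by_cases hx : 0 ≤ x
  · simp only [if_pos hx, one_mul]
    constructor
    · rintro ⟨⟨_, hty⟩, ⟨_, hx1⟩, ht⟩
      exact Or.inr ⟨⟨hx, hx1⟩, ht, abs_le.mp hty⟩
    · rintro (⟨⟨_, hx0⟩, _⟩ | ⟨⟨_, hx1⟩, ht, hyt⟩)
      · linarith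
      · exact ⟨⟨by linarith [abs_nonneg t], abs_le.mpr hyt⟩, ⟨by linarith, hx1⟩, ht⟩
  · push_neg at hx
    simp only [if_neg (not_le.mpr hx), neg_one_mul]
    constructor
    · rintro ⟨⟨_, hty⟩, ⟨hx1, _⟩, ht⟩
      refine Or.inl ⟨⟨hx1, hx⟩, ht, fun hyc => ?_⟩
      rcases abs_cases t with ⟨he, _⟩ | ⟨he, _⟩ <;> linarith
    · rintro (⟨⟨hx1, _⟩, ht, hcon⟩ | ⟨⟨hx0, _⟩, _⟩)
      · refine ⟨⟨?_, ?_⟩, ⟨hx1, by linarith⟩, ht⟩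
        · rcases abs_cases t with ⟨he, _⟩ | ⟨he, _⟩ <;> rw [he] <;> [linarith [ht.2]; linarith [ht.1]]
        · by_cases hyt : yc < t
          · have := hcon hyt
            rcases abs_cases t with ⟨he, _⟩ | ⟨he, _⟩ <;> linarith
          · push_neg at hyt
            rcases abs_cases t with ⟨he, hp⟩ | ⟨he, hp⟩ <;> linarith
      · linarith

lemma prod_inter_snd (a b u : Set ℝ) :
    (a ×ˢ b) ∩ Prod.snd ⁻¹' u = a ×ˢ (b ∩ u) := by
  ext ⟨x,t⟩
  simp only [Set.mem_inter_iff, Set.mem_preimage, Set.mem_prod]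
  tauto

lemma measA {yc : ℝ} {u : Set ℝ} (hu : MeasurableSet u) :
    unifSq (Ymod ⁻¹' (Icc (-1) yc) ∩ Prod.snd ⁻¹' u)
      = 4⁻¹ * (volume (Icc (-1:ℝ) 1 ∩ (Ioo yc (-yc))ᶜ ∩ u)
          + volume (Icc (-1:ℝ) 1 ∩ Icc (-yc) yc ∩ u)) := by
  have hA : MeasurableSet (Ymod ⁻¹' (Icc (-1) yc)) := Ymod_meas measurableSet_Icc
  rw [unifSq_apply (hA.inter (measurable_snd hu)), Set.inter_right_comm, decompA,
    Set.union_inter_distrib_right, prod_inter_snd, prod_inter_snd]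
  rw [measure_union ?hd ((measurableSet_Icc.prod
      ((measurableSet_Icc.inter measurableSet_Icc).inter hu)))]
  case hd =>
    refine Set.disjoint_left.mpr ?_
    rintro ⟨x,t⟩ hm1 hm2
    exact absurd hm2.1.1 (not_le.mpr hm1.1.2)
  rw [Measure.prod_prod, Measure.prod_prod, Real.volume_Ico, Real.volume_Icc]
  norm_num [Set.inter_assoc]

noncomputable def hfun (yc : ℝ) : ℝ × ℝ → ℝ := fun ω =>
  2⁻¹ * (Prod.snd ⁻¹' (Ioo yc (-yc))ᶜ).indicator 1 ω
    + 2⁻¹ * (Prod.snd ⁻¹' (Icc (-yc) yc)).indicator 1 ω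

lemma indC_eq (C : Set ℝ) : indC C = (Ymod ⁻¹' C).indicator 1 := rfl

lemma hfun_integrable (yc : ℝ) : Integrable (hfun yc) unifSq := by
  have h1 : Integrable ((Prod.snd ⁻¹' (Ioo yc (-yc))ᶜ).indicator (1 : ℝ × ℝ → ℝ)) unifSq :=
    (integrable_const (1:ℝ)).indicator (measurable_snd measurableSet_Ioo.compl)
  have h2 : Integrable ((Prod.snd ⁻¹' (Icc (-yc) yc)).indicator (1 : ℝ × ℝ → ℝ)) unifSq :=
    (integrable_const (1:ℝ)).indicator (measurable_snd measurableSet_Icc)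
  exact (h1.const_mul _).add (h2.const_mul _)

lemma vol_ne_top {s : Set ℝ} (hs : s ⊆ Icc (-1:ℝ) 1) : volume s ≠ ⊤ :=
  ((measure_mono hs).trans_lt (by rw [Real.volume_Icc]; exact ENNReal.ofReal_lt_top)).ne

lemma condexp_ae {yc : ℝ} :
    hfun yc =ᵐ[unifSq]
      unifSq[indC (Icc (-1) yc) | MeasurableSpace.comap Prod.snd inferInstance] := by
  have hA : MeasurableSet (Ymod ⁻¹' (Icc (-1) yc)) := Ymod_meas measurableSet_Icc
  refine ae_eq_condExp_of_forall_setIntegral_eq measurable_snd.comap_le ?_ ?_ ?_ ?_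
  · rw [indC_eq]
    exact (integrable_const (1:ℝ)).indicator hA
  · exact fun s _ _ => (hfun_integrable yc).integrableOn
  · rintro s ⟨u, hu, rfl⟩ -
    rw [indC_eq, integral_indicator_one hA, Measure.real_def, Measure.restrict_apply hA, measA hu]
    have hint1 : Integrable (fun ω => (2⁻¹:ℝ) * (Prod.snd ⁻¹' (Ioo yc (-yc))ᶜ).indicator (1 : ℝ × ℝ → ℝ) ω)
        (unifSq.restrict (Prod.snd ⁻¹' u)) :=
      (((integrable_const (1:ℝ)).indicator
        (measurable_snd measurableSet_Ioo.compl)).const_mul _).restrict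
    have hint2 : Integrable (fun ω => (2⁻¹:ℝ) * (Prod.snd ⁻¹' (Icc (-yc) yc)).indicator (1 : ℝ × ℝ → ℝ) ω)
        (unifSq.restrict (Prod.snd ⁻¹' u)) :=
      (((integrable_const (1:ℝ)).indicator
        (measurable_snd measurableSet_Icc)).const_mul _).restrict
    rw [show (hfun yc) = (fun ω => (2⁻¹:ℝ) * (Prod.snd ⁻¹' (Ioo yc (-yc))ᶜ).indicator (1 : ℝ × ℝ → ℝ) ω)
        + (fun ω => (2⁻¹:ℝ) * (Prod.snd ⁻¹' (Icc (-yc) yc)).indicator (1 : ℝ × ℝ → ℝ) ω) from rfl]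
    simp only [Pi.add_apply]
    rw [integral_add hint1 hint2, integral_const_mul, integral_const_mul,
      integral_indicator_one (measurable_snd measurableSet_Ioo.compl),
      integral_indicator_one (measurable_snd measurableSet_Icc), Measure.real_def, Measure.real_def,
      Measure.restrict_apply (measurable_snd measurableSet_Ioo.compl),
      Measure.restrict_apply (measurable_snd measurableSet_Icc),
      ← Set.preimage_inter, ← Set.preimage_inter, unifSq_snd (measurableSet_Ioo.compl.inter hu),
      unifSq_snd (measurableSet_Icc.inter hu), ← Set.inter_assoc, ← Set.inter_assoc]
    have ha := vol_ne_top (s := Icc (-1:ℝ) 1 ∩ (Ioo yc (-yc))ᶜ ∩ u)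
      ((Set.inter_subset_left).trans Set.inter_subset_left)
    have hb := vol_ne_top (s := Icc (-1:ℝ) 1 ∩ Icc (-yc) yc ∩ u)
      ((Set.inter_subset_left).trans Set.inter_subset_left)
    rw [ENNReal.toReal_mul, ENNReal.toReal_mul, ENNReal.toReal_mul,
      ENNReal.toReal_add ha hb]
    norm_num
    ring
  · have hsndm : Measurable[MeasurableSpace.comap (Prod.snd : ℝ × ℝ → ℝ) inferInstance]
        (Prod.snd : ℝ × ℝ → ℝ) := Measurable.of_comap_le le_rfl
    have hB1m : MeasurableSet[MeasurableSpace.comap (Prod.snd : ℝ × ℝ → ℝ) inferInstance]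
        (Prod.snd ⁻¹' (Ioo yc (-yc))ᶜ) := hsndm measurableSet_Ioo.compl
    have hB2m : MeasurableSet[MeasurableSpace.comap (Prod.snd : ℝ × ℝ → ℝ) inferInstance]
        (Prod.snd ⁻¹' (Icc (-yc) yc)) := hsndm measurableSet_Icc
    have h1 : Measurable[MeasurableSpace.comap (Prod.snd : ℝ × ℝ → ℝ) inferInstance]
        ((Prod.snd ⁻¹' (Ioo yc (-yc))ᶜ).indicator (1 : ℝ × ℝ → ℝ)) :=
      measurable_const.indicator hB1m
    have h2 : Measurable[MeasurableSpace.comap (Prod.snd : ℝ × ℝ → ℝ) inferInstance]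
        ((Prod.snd ⁻¹' (Icc (-yc) yc)).indicator (1 : ℝ × ℝ → ℝ)) :=
      measurable_const.indicator hB2m
    refine StronglyMeasurable.aestronglyMeasurable (Measurable.stronglyMeasurable ?_)
    exact Measurable.add (h1.const_mul _) (h2.const_mul _)

theorem stmt5 (yc : ℝ) (h : yc ∈ Ioo (-1 : ℝ) 1) :
    SIdx Prod.snd (Icc (-1 : ℝ) yc) = |yc| / (1 + |yc|) := by
  obtain ⟨h1, h2⟩ := h
  have hA : MeasurableSet (Ymod ⁻¹' Icc (-1) yc) := Ymod_meas measurableSet_Icc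
  have hB1 : MeasurableSet (Prod.snd ⁻¹' (Ioo yc (-yc))ᶜ : Set (ℝ × ℝ)) :=
    measurable_snd measurableSet_Ioo.compl
  have hB2 : MeasurableSet (Prod.snd ⁻¹' (Icc (-yc) yc) : Set (ℝ × ℝ)) :=
    measurable_snd measurableSet_Icc
  -- real-valued probabilities
  set q1 : ℝ := (unifSq (Prod.snd ⁻¹' (Ioo yc (-yc))ᶜ)).toReal with hq1def
  set q2 : ℝ := (unifSq (Prod.snd ⁻¹' (Icc (-yc) yc))).toReal with hq2def
  set p : ℝ := (unifSq (Ymod ⁻¹' Icc (-1) yc)).toReal with hpdef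
  -- numerator variance
  have hvar1 : variance (unifSq[indC (Icc (-1) yc) | MeasurableSpace.comap Prod.snd
      inferInstance]) unifSq = variance (hfun yc) unifSq :=
    (_root_.variance_congr condexp_ae).symm
  -- memℒp facts
  have hm1 : MemLp ((Prod.snd ⁻¹' (Ioo yc (-yc))ᶜ).indicator (1 : ℝ × ℝ → ℝ)) 2 unifSq :=
    (memLp_const 1).indicator hB1
  have hm2 : MemLp ((Prod.snd ⁻¹' (Icc (-yc) yc)).indicator (1 : ℝ × ℝ → ℝ)) 2 unifSq :=
    (memLp_const 1).indicator hB2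
  have hmh : MemLp (hfun yc) 2 unifSq := (hm1.const_mul _).add (hm2.const_mul _)
  have hsub : (Prod.snd ⁻¹' (Icc (-yc) yc) : Set (ℝ × ℝ)) ⊆ Prod.snd ⁻¹' (Ioo yc (-yc))ᶜ := by
    intro ω hω
    simp only [Set.mem_preimage, Set.mem_Icc] at hω
    simp only [Set.mem_preimage, Set.mem_compl_iff, Set.mem_Ioo, not_and, not_lt]
    exact fun _ => hω.1
  -- square of hfun
  have hsq : (hfun yc) ^ 2 = fun ω => (4⁻¹ : ℝ) * (Prod.snd ⁻¹' (Ioo yc (-yc))ᶜ).indicator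
      (1 : ℝ × ℝ → ℝ) ω + (3 * 4⁻¹ : ℝ) * (Prod.snd ⁻¹' (Icc (-yc) yc)).indicator
      (1 : ℝ × ℝ → ℝ) ω := by
    funext ω
    simp only [Pi.pow_apply, hfun]
    by_cases hb2 : ω ∈ (Prod.snd ⁻¹' (Icc (-yc) yc) : Set (ℝ × ℝ))
    · have hb1 := hsub hb2
      simp only [Set.indicator_of_mem, hb1, hb2, Pi.one_apply]
      norm_num
    · by_cases hb1 : ω ∈ (Prod.snd ⁻¹' (Ioo yc (-yc))ᶜ : Set (ℝ × ℝ)) <;>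
        simp only [Set.indicator_of_mem, Set.indicator_of_notMem, hb1, hb2, Pi.one_apply,
          not_false_iff] <;> norm_num
  -- integral of hfun
  have hint1 : Integrable (fun ω => (2⁻¹:ℝ) * (Prod.snd ⁻¹' (Ioo yc (-yc))ᶜ).indicator
      (1 : ℝ × ℝ → ℝ) ω) unifSq := ((integrable_const (1:ℝ)).indicator hB1).const_mul _
  have hint2 : Integrable (fun ω => (2⁻¹:ℝ) * (Prod.snd ⁻¹' (Icc (-yc) yc)).indicator
      (1 : ℝ × ℝ → ℝ) ω) unifSq := ((integrable_const (1:ℝ)).indicator hB2).const_mul _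
  have hIh : ∫ ω, hfun yc ω ∂unifSq = 2⁻¹ * q1 + 2⁻¹ * q2 := by
    rw [show (∫ ω, hfun yc ω ∂unifSq)
        = (∫ ω, (2⁻¹:ℝ) * (Prod.snd ⁻¹' (Ioo yc (-yc))ᶜ).indicator (1 : ℝ × ℝ → ℝ) ω ∂unifSq)
          + (∫ ω, (2⁻¹:ℝ) * (Prod.snd ⁻¹' (Icc (-yc) yc)).indicator (1 : ℝ × ℝ → ℝ) ω ∂unifSq)
        from integral_add hint1 hint2,
      integral_const_mul, integral_const_mul,
      integral_indicator_one hB1, integral_indicator_one hB2, Measure.real_def, Measure.real_def]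
  have hint1' : Integrable (fun ω => (4⁻¹:ℝ) * (Prod.snd ⁻¹' (Ioo yc (-yc))ᶜ).indicator
      (1 : ℝ × ℝ → ℝ) ω) unifSq := ((integrable_const (1:ℝ)).indicator hB1).const_mul _
  have hint2' : Integrable (fun ω => (3 * 4⁻¹:ℝ) * (Prod.snd ⁻¹' (Icc (-yc) yc)).indicator
      (1 : ℝ × ℝ → ℝ) ω) unifSq := ((integrable_const (1:ℝ)).indicator hB2).const_mul _
  have hIh2 : ∫ ω, ((hfun yc) ^ 2) ω ∂unifSq = 4⁻¹ * q1 + 3 * 4⁻¹ * q2 := by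
    rw [hsq]
    rw [show (∫ ω, ((4⁻¹:ℝ) * (Prod.snd ⁻¹' (Ioo yc (-yc))ᶜ).indicator (1 : ℝ × ℝ → ℝ) ω
          + (3 * 4⁻¹:ℝ) * (Prod.snd ⁻¹' (Icc (-yc) yc)).indicator (1 : ℝ × ℝ → ℝ) ω) ∂unifSq)
        = (∫ ω, (4⁻¹:ℝ) * (Prod.snd ⁻¹' (Ioo yc (-yc))ᶜ).indicator (1 : ℝ × ℝ → ℝ) ω ∂unifSq)
          + (∫ ω, (3 * 4⁻¹:ℝ) * (Prod.snd ⁻¹' (Icc (-yc) yc)).indicator (1 : ℝ × ℝ → ℝ) ω ∂unifSq)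
        from integral_add hint1' hint2',
      integral_const_mul, integral_const_mul,
      integral_indicator_one hB1, integral_indicator_one hB2, Measure.real_def, Measure.real_def]
  have hVarNum : variance (hfun yc) unifSq
      = (4⁻¹ * q1 + 3 * 4⁻¹ * q2) - (2⁻¹ * q1 + 2⁻¹ * q2) ^ 2 := by
    rw [variance_eq_sub hmh]
    rw [show (∫ ω, ((hfun yc) ^ 2) ω ∂unifSq) = 4⁻¹ * q1 + 3 * 4⁻¹ * q2 from hIh2,
      show (∫ ω, hfun yc ω ∂unifSq) = 2⁻¹ * q1 + 2⁻¹ * q2 from hIh]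
  -- denominator variance
  have hmf : MemLp (indC (Icc (-1) yc)) 2 unifSq := by
    rw [indC_eq]; exact (memLp_const 1).indicator hA
  have hfsq : (indC (Icc (-1) yc)) ^ 2 = indC (Icc (-1) yc) := by
    funext ω
    rw [Pi.pow_apply, indC_eq]
    by_cases hω : ω ∈ Ymod ⁻¹' Icc (-1) yc <;>
      simp [Set.indicator_of_mem, Set.indicator_of_notMem, hω]
  have hIf : ∫ ω, indC (Icc (-1) yc) ω ∂unifSq = p := by
    rw [show (fun ω => indC (Icc (-1) yc) ω) = (Ymod ⁻¹' Icc (-1) yc).indicator 1 from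
      indC_eq _, integral_indicator_one hA, Measure.real_def]
  have hVarDen : variance (indC (Icc (-1) yc)) unifSq = p - p ^ 2 := by
    rw [variance_eq_sub hmf, hfsq,
      show (∫ ω, indC (Icc (-1) yc) ω ∂unifSq) = p from hIf]
  -- values of the probabilities
  have hpv : unifSq (Ymod ⁻¹' Icc (-1) yc)
      = 4⁻¹ * (volume (Icc (-1:ℝ) 1 ∩ (Ioo yc (-yc))ᶜ) + volume (Icc (-1:ℝ) 1 ∩ Icc (-yc) yc)) := by
    have := measA (yc := yc) (u := univ) MeasurableSet.univ
    simpa using this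
  have hq1v : unifSq (Prod.snd ⁻¹' (Ioo yc (-yc))ᶜ)
      = 2⁻¹ * volume (Icc (-1:ℝ) 1 ∩ (Ioo yc (-yc))ᶜ) := unifSq_snd measurableSet_Ioo.compl
  have hq2v : unifSq (Prod.snd ⁻¹' (Icc (-yc) yc))
      = 2⁻¹ * volume (Icc (-1:ℝ) 1 ∩ Icc (-yc) yc) := unifSq_snd measurableSet_Icc
  -- unfold SIdx
  rw [SIdx, hvar1, hVarNum, hVarDen]
  -- case split on the sign of yc
  rcases le_or_gt 0 yc with hyc | hyc
  · -- yc ≥ 0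
    have e1 : Icc (-1:ℝ) 1 ∩ (Ioo yc (-yc))ᶜ = Icc (-1:ℝ) 1 := by
      rw [Set.Ioo_eq_empty (by linarith), Set.compl_empty, Set.inter_univ]
    have e2 : Icc (-1:ℝ) 1 ∩ Icc (-yc) yc = Icc (-yc) yc :=
      Set.inter_eq_self_of_subset_right (Set.Icc_subset_Icc (by linarith) (by linarith))
    have hq1r : q1 = 1 := by
      rw [hq1def, hq1v, e1, Real.volume_Icc, ENNReal.toReal_mul]
      norm_num
    have hq2r : q2 = yc := by
      rw [hq2def, hq2v, e2, Real.volume_Icc, ENNReal.toReal_mul,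
        ENNReal.toReal_ofReal (by linarith)]
      norm_num
      ring
    have hpr : p = (1 + yc) / 2 := by
      rw [hpdef, hpv, e1, e2, Real.volume_Icc, Real.volume_Icc, ENNReal.toReal_mul,
        ENNReal.toReal_add ENNReal.ofReal_ne_top ENNReal.ofReal_ne_top,
        ENNReal.toReal_ofReal (by linarith), ENNReal.toReal_ofReal (by linarith)]
      norm_num
      ring
    rw [hq1r, hq2r, hpr, abs_of_nonneg hyc]
    rw [div_eq_div_iff (by nlinarith) (by nlinarith)]
    ring
  · -- yc < 0
    have e2 : Icc (-1:ℝ) 1 ∩ Icc (-yc) yc = (∅ : Set ℝ) := by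
      rw [Set.Icc_eq_empty_of_lt (show yc < -yc by linarith), Set.inter_empty]
    have e1 : Icc (-1:ℝ) 1 ∩ (Ioo yc (-yc))ᶜ = Icc (-1:ℝ) 1 \ Ioo yc (-yc) := by
      rw [Set.diff_eq]
    have hvol1 : volume (Icc (-1:ℝ) 1 ∩ (Ioo yc (-yc))ᶜ) = ENNReal.ofReal (2 + 2 * yc) := by
      rw [e1, measure_diff ?hsub measurableSet_Ioo.nullMeasurableSet
        (vol_ne_top Set.Subset.rfl |> fun h => (measure_mono ?hsub').trans_lt
          (lt_top_iff_ne_top.2 h) |>.ne)]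
      case hsub => exact fun x hx => ⟨by linarith [hx.1], by linarith [hx.2]⟩
      case hsub' => exact fun x hx => ⟨by linarith [hx.1], by linarith [hx.2]⟩
      rw [Real.volume_Icc, Real.volume_Ioo, ← ENNReal.ofReal_sub _ (by linarith)]
      congr 1
      ring
    have hq1r : q1 = 1 + yc := by
      rw [hq1def, hq1v, hvol1, ENNReal.toReal_mul, ENNReal.toReal_ofReal (by linarith)]
      norm_num
      ring
    have hq2r : q2 = 0 := by
      rw [hq2def, hq2v, e2]
      simp
    have hpr : p = (1 + yc) / 2 := by
      rw [hpdef, hpv, hvol1, e2, measure_empty, add_zero, ENNReal.toReal_mul,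
        ENNReal.toReal_ofReal (by linarith)]
      norm_num
      ring
    rw [hq1r, hq2r, hpr, abs_of_neg hyc]
    rw [div_eq_div_iff (by nlinarith) (by nlinarith)]
    ring
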